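/- arXiv:2011.10705 — 2 statements merged into one kernel-verified Lean document; each statement's English description precedes it below -/
import Mathlib

section
/- Under the central-difference discretization of the proposed scalar-transport model on a uniform 1D grid, if 0 ≤ φ_i^k ≤ 1 for all i and k, and the grid size satisfies Δx ≤ 2D/(|u|_max + |u_r|_max + D/ε) and the time step satisfies Δt ≤ Δx²/(2D), then the coefficient C̃_{i-1}^k = Δt u_{i-1}^k/(2Δx) + Δt u_{r,i-1}^k φ_{i-1}^k/(2Δx) + Δt D/Δx² + (Δt D/(2εΔx))(1-φ_{i-1}^k) n_{i-1}^k is nonnegative, where n_{i-1}^k ∈ [-1,1]. -/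
/-!
Multiplying the coefficient by `2 ε Δx² / Δt > 0` leaves
`ε Δx u + ε Δx u_r φ + 2 ε D + Δx D (1 - φ) n`. Each of `u`, `u_r φ` and `(1 - φ) n` is bounded
below by minus its bound (`|u|_max`, `|u_r|_max`, `1`), so this is at least
`2 ε D - Δx (ε (|u|_max + |u_r|_max) + D)`, which is nonnegative exactly by the grid condition.
-/

lemma neg_le_mul_of_abs_le {a M t : ℝ} (ha : |a| ≤ M) (ht0 : 0 ≤ t) (ht1 : t ≤ 1) :
    -M ≤ a * t := by
  have : |a * t| ≤ M := by
    rw [abs_mul, abs_of_nonneg ht0]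
    exact (mul_le_of_le_one_right (abs_nonneg a) ht1).trans ha
  exact (abs_le.mp this).1

lemma mul_add_le_of_le_div_add_div {Δx a D ε : ℝ} (hε : 0 < ε) (ha : 0 < a + D / ε)
    (h : Δx ≤ 2 * D / (a + D / ε)) :
    ε * Δx * a + Δx * D ≤ 2 * ε * D := by
  have h' : Δx * (a + D / ε) ≤ 2 * D := (le_div_iff₀ ha).mp h
  have : ε * Δx * a + Δx * D = ε * (Δx * (a + D / ε)) := by field_simp
  rw [this, mul_comm 2 ε, mul_assoc]
  exact mul_le_mul_of_nonneg_left h' hε.le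

lemma coefficient_eq_mul (D ε Δx Δt u ur φ n : ℝ) (hε : ε ≠ 0) (hΔx : Δx ≠ 0) :
    Δt * u / (2 * Δx) + Δt * ur * φ / (2 * Δx) + Δt * D / Δx ^ 2 +
        (Δt * D / (2 * ε * Δx)) * (1 - φ) * n =
      Δt / (2 * ε * Δx ^ 2) *
        (ε * Δx * u + ε * Δx * (ur * φ) + 2 * ε * D + Δx * D * ((1 - φ) * n)) := by
  field_simp

theorem coefficient_im1_nonneg_general
    (D ε Δx Δt umax urmax : ℝ)
    (hD : 0 < D) (hε : 0 < ε) (hΔx : 0 < Δx) (hΔt : 0 < Δt)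
    (u ur φ n : ℝ)
    (hu : |u| ≤ umax) (hur : |ur| ≤ urmax)
    (hφ0 : 0 ≤ φ) (hφ1 : φ ≤ 1) (hn : n ∈ Set.Icc (-1 : ℝ) 1)
    (hgrid : Δx ≤ 2 * D / (umax + urmax + D / ε)) :
    0 ≤ Δt * u / (2 * Δx) + Δt * ur * φ / (2 * Δx) + Δt * D / Δx ^ 2 +
        (Δt * D / (2 * ε * Δx)) * (1 - φ) * n := by
  rw [coefficient_eq_mul D ε Δx Δt u ur φ n hε.ne' hΔx.ne']
  refine mul_nonneg (by positivity) ?_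
  have hu' : -umax ≤ u := (abs_le.mp hu).1
  have hurφ : -urmax ≤ ur * φ := neg_le_mul_of_abs_le hur hφ0 hφ1
  have hnφ : -1 ≤ n * (1 - φ) := neg_le_mul_of_abs_le (abs_le.mpr hn) (by linarith) (by linarith)
  have hpos : 0 < umax + urmax + D / ε := by
    have := (abs_nonneg u).trans hu
    have := (abs_nonneg ur).trans hur
    positivity
  have hcfl := mul_add_le_of_le_div_add_div hε hpos hgrid
  have hεΔx : 0 ≤ ε * Δx := by positivity
  have hΔxD : 0 ≤ Δx * D := by positivity
  linarith [mul_le_mul_of_nonneg_left hu' hεΔx, mul_le_mul_of_nonneg_left hurφ hεΔx,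
    mul_le_mul_of_nonneg_left hnφ hΔxD]

theorem coefficient_im1_nonneg
    (D ε Δx Δt umax urmax : ℝ)
    (hD : 0 < D) (hε : 0 < ε) (hΔx : 0 < Δx) (hΔt : 0 < Δt)
    (u ur φ n : ℝ)
    (hu : |u| ≤ umax) (hur : |ur| ≤ urmax)
    (hφ0 : 0 ≤ φ) (hφ1 : φ ≤ 1) (hn : n ∈ Set.Icc (-1 : ℝ) 1)
    (hgrid : Δx ≤ 2 * D / (umax + urmax + D / ε))
    (htime : Δt ≤ Δx ^ 2 / (2 * D)) :
    0 ≤ Δt * u / (2 * Δx) + Δt * ur * φ / (2 * Δx) + Δt * D / Δx ^ 2 +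
        (Δt * D / (2 * ε * Δx)) * (1 - φ) * n :=
  coefficient_im1_nonneg_general D ε Δx Δt umax urmax hD hε hΔx hΔt u ur φ n hu hur hφ0 hφ1 hn hgrid
end

section
/- Under the same hypotheses (Δx ≤ 2D/(|u|_max + |u_r|_max + D/ε), Δt ≤ Δx²/(2D), φ values in [0,1], normal values in [-1,1], velocities bounded by |u|_max and |u_r|_max), all three stencil coefficients C̃_{i-1}^k, C̃_i^k = 1 - 2ΔtD/Δx², and C̃_{i+1}^k = -Δt u_{i+1}^k/(2Δx) - Δt u_{r,i+1}^k φ_{i+1}^k/(2Δx) + ΔtD/Δx² - (ΔtD/(2εΔx))(1-φ_{i+1}^k) n_{i+1}^k are nonnegative; consequently, if c_i^0 ≥ 0 for all i, then c_i^k ≥ 0 for all i and all k ∈ ℕ. -/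
/-!
All three coefficients are nonnegative because the grid condition makes the cell Péclet
number at most 2: the effective advection velocity `v = u + φ u_r + (D/ε)(1 - φ) n` is bounded
by `|u|_max + |u_r|_max + D/ε ≤ 2D/Δx`, and the off-diagonal coefficients are
`Δt/(2Δx) · (2D/Δx ± v)`; the time step condition handles the diagonal one. The update is then
a nonnegative combination of nonnegative values, so positivity propagates by induction on `k`.
-/

open Set

/-- The flux of the equation is `v c - D ∂c/∂x` with this velocity `v`. -/
noncomputable def effectiveVelocity (D ε u ur φ n : ℝ) : ℝ :=
  u + ur * φ + D / ε * ((1 - φ) * n)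

lemma abs_mul_le_of_abs_le_one {x y M : ℝ} (hx : |x| ≤ M) (hy : |y| ≤ 1) : |x * y| ≤ M := by
  rw [abs_mul]
  exact (mul_le_of_le_one_right (abs_nonneg x) hy).trans hx

lemma abs_effectiveVelocity_le {D ε u ur φ n umax urmax : ℝ} (hDε : 0 ≤ D / ε)
    (hu : |u| ≤ umax) (hur : |ur| ≤ urmax) (hφ : φ ∈ Icc (0 : ℝ) 1) (hn : n ∈ Icc (-1 : ℝ) 1) :
    |effectiveVelocity D ε u ur φ n| ≤ umax + urmax + D / ε := by
  have hφ_abs : |φ| ≤ 1 := abs_le.mpr ⟨by linarith [hφ.1], hφ.2⟩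
  have hφ'_abs : |1 - φ| ≤ 1 := abs_le.mpr ⟨by linarith [hφ.2], by linarith [hφ.1]⟩
  have hn_abs : |n| ≤ 1 := abs_le.mpr hn
  have hdiffusive : |D / ε * ((1 - φ) * n)| ≤ D / ε :=
    abs_mul_le_of_abs_le_one (abs_of_nonneg hDε).le (abs_mul_le_of_abs_le_one hφ'_abs hn_abs)
  calc |effectiveVelocity D ε u ur φ n|
      ≤ |u| + |ur * φ| + |D / ε * ((1 - φ) * n)| := abs_add_three _ _ _
    _ ≤ umax + urmax + D / ε := by
      gcongr
      exact abs_mul_le_of_abs_le_one hur hφ_abs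

lemma coeff_minus_eq (D ε Δx Δt u ur φ n : ℝ) (hε : ε ≠ 0) (hΔx : Δx ≠ 0) :
    Δt * u / (2 * Δx) + Δt * ur * φ / (2 * Δx) + Δt * D / Δx ^ 2 +
        (Δt * D / (2 * ε * Δx)) * (1 - φ) * n =
      Δt / (2 * Δx) * (2 * D / Δx + effectiveVelocity D ε u ur φ n) := by
  unfold effectiveVelocity
  field_simp
  ring

lemma coeff_plus_eq (D ε Δx Δt u ur φ n : ℝ) (hε : ε ≠ 0) (hΔx : Δx ≠ 0) :
    -(Δt * u / (2 * Δx)) - Δt * ur * φ / (2 * Δx) + Δt * D / Δx ^ 2 -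
        (Δt * D / (2 * ε * Δx)) * (1 - φ) * n =
      Δt / (2 * Δx) * (2 * D / Δx - effectiveVelocity D ε u ur φ n) := by
  unfold effectiveVelocity
  field_simp
  ring

lemma one_sub_two_mul_div_sq_nonneg {D Δx Δt : ℝ} (hD : 0 < D) (hΔx : 0 < Δx)
    (htime : Δt ≤ Δx ^ 2 / (2 * D)) : 0 ≤ 1 - 2 * Δt * D / Δx ^ 2 := by
  rw [le_div_iff₀' (by positivity)] at htime
  rw [sub_nonneg, div_le_one (by positivity)]
  linarith

lemma nonneg_of_nonneg_stencil {Cm Cc Cp c : ℕ → ℤ → ℝ}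
    (hcoef : ∀ k i, 0 ≤ Cm k i ∧ 0 ≤ Cc k i ∧ 0 ≤ Cp k i)
    (hupd : ∀ k i, c (k + 1) i = Cm k i * c k (i - 1) + Cc k i * c k i + Cp k i * c k (i + 1))
    (h0 : ∀ i, 0 ≤ c 0 i) :
    ∀ k i, 0 ≤ c k i := by
  intro k
  induction k with
  | zero => exact h0
  | succ k ih =>
    intro i
    obtain ⟨hm, hc, hp⟩ := hcoef k i
    rw [hupd]
    exact add_nonneg (add_nonneg (mul_nonneg hm (ih _)) (mul_nonneg hc (ih _)))
      (mul_nonneg hp (ih _))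

theorem positivity_theorem
    (D ε Δx Δt umax urmax : ℝ)
    (hD : 0 < D) (hε : 0 < ε) (hΔx : 0 < Δx) (hΔt : 0 < Δt)
    (u ur φ n : ℕ → ℤ → ℝ)
    (hu : ∀ k i, |u k i| ≤ umax) (hur : ∀ k i, |ur k i| ≤ urmax)
    (hφ : ∀ k i, φ k i ∈ Set.Icc (0 : ℝ) 1)
    (hn : ∀ k i, n k i ∈ Set.Icc (-1 : ℝ) 1)
    (hgrid : Δx ≤ 2 * D / (umax + urmax + D / ε))
    (htime : Δt ≤ Δx ^ 2 / (2 * D))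
    (Cm Cc Cp : ℕ → ℤ → ℝ)
    (hCm : ∀ k i, Cm k i = Δt * u k (i - 1) / (2 * Δx) +
        Δt * ur k (i - 1) * φ k (i - 1) / (2 * Δx) + Δt * D / Δx ^ 2 +
        (Δt * D / (2 * ε * Δx)) * (1 - φ k (i - 1)) * n k (i - 1))
    (hCc : ∀ k i, Cc k i = 1 - 2 * Δt * D / Δx ^ 2)
    (hCp : ∀ k i, Cp k i = -(Δt * u k (i + 1) / (2 * Δx)) -
        Δt * ur k (i + 1) * φ k (i + 1) / (2 * Δx) + Δt * D / Δx ^ 2 -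
        (Δt * D / (2 * ε * Δx)) * (1 - φ k (i + 1)) * n k (i + 1))
    (c : ℕ → ℤ → ℝ)
    (hupd : ∀ k i, c (k + 1) i =
      Cm k i * c k (i - 1) + Cc k i * c k i + Cp k i * c k (i + 1))
    (h0 : ∀ i, 0 ≤ c 0 i) :
    (∀ k i, 0 ≤ Cm k i ∧ 0 ≤ Cc k i ∧ 0 ≤ Cp k i) ∧ ∀ k i, 0 ≤ c k i := by
  have hDε : 0 ≤ D / ε := by positivity
  have hscale : 0 ≤ Δt / (2 * Δx) := by positivity
  have hpeclet : umax + urmax + D / ε ≤ 2 * D / Δx := by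
    have : 0 < umax + urmax + D / ε := by
      linarith [(abs_nonneg _).trans (hu 0 0), (abs_nonneg _).trans (hur 0 0), div_pos hD hε]
    exact (le_div_comm₀ hΔx this).mp hgrid
  have hvel : ∀ k i, |effectiveVelocity D ε (u k i) (ur k i) (φ k i) (n k i)| ≤ 2 * D / Δx :=
    fun k i => (abs_effectiveVelocity_le hDε (hu k i) (hur k i) (hφ k i) (hn k i)).trans hpeclet
  have hcoef : ∀ k i, 0 ≤ Cm k i ∧ 0 ≤ Cc k i ∧ 0 ≤ Cp k i := by
    intro k i
    refine ⟨?_, ?_, ?_⟩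
    · rw [hCm, coeff_minus_eq _ _ _ _ _ _ _ _ hε.ne' hΔx.ne']
      exact mul_nonneg hscale (by linarith [(abs_le.mp (hvel k (i - 1))).1])
    · rw [hCc]
      exact one_sub_two_mul_div_sq_nonneg hD hΔx htime
    · rw [hCp, coeff_plus_eq _ _ _ _ _ _ _ _ hε.ne' hΔx.ne']
      exact mul_nonneg hscale (by linarith [(abs_le.mp (hvel k (i + 1))).2])
  exact ⟨hcoef, nonneg_of_nonneg_stencil hcoef hupd h0⟩
end
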